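/- arXiv:0906.4774 — 4 statements merged into one kernel-verified Lean document; each statement's English description precedes it below -/
import Mathlib

section
/- Let Δ be a sequence of n linear forms spanning the dual of an ℓ-dimensional vector space V, with E = {1,…,n} linearly ordered. Then the set {α_{E−(I ∪ ex(I))} : I an independent set of M(Δ)} spans P(Δ), where ex(I) is the set of externally active elements of I. -/
open MvPolynomial Finset Submodule
open scoped Classical

noncomputable section

variable {K : Type*} [Field K] {ι σ : Type*} [Fintype ι]

/-- The product `α_S = ∏_{i ∈ S} α_i` of the linear forms indexed by `S`. -/
def prodForms (Δ : ι → MvPolynomial σ K) (S : Finset ι) : MvPolynomial σ K := ∏ i ∈ S, Δ i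

/-- `P(Δ)`: the span of all subproducts of `Δ` inside `Sym(V*)` (realized as a
polynomial ring). -/
def Pspace (Δ : ι → MvPolynomial σ K) : Submodule K (MvPolynomial σ K) :=
  span K (Set.range fun S : Finset ι => prodForms Δ S)

/-- The rank function of the realized matroid `M(Δ)`:
`r(S) = dim span {α_i : i ∈ S}`. -/
def rk (Δ : ι → MvPolynomial σ K) (S : Finset ι) : ℕ :=
  Module.finrank K (span K (Δ '' (S : Set ι)))

/-- The closure of `S` in the matroid `M(Δ)`. -/
def clos (Δ : ι → MvPolynomial σ K) (S : Finset ι) : Finset ι :=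
  Finset.univ.filter fun i => Δ i ∈ span K (Δ '' (S : Set ι))

/-- `X` is a flat of `M(Δ)`. -/
def IsFlat (Δ : ι → MvPolynomial σ K) (X : Finset ι) : Prop := clos Δ X = X

/-- `P(Δ)_X`: span of the `α_S` with `cl(E − S) = X`. -/
def PX (Δ : ι → MvPolynomial σ K) (X : Finset ι) : Submodule K (MvPolynomial σ K) :=
  span K {p | ∃ S : Finset ι, clos Δ (univ \ S) = X ∧ p = prodForms Δ S}

/-- `P(Δ)_{X,k}`: span of the `α_S` with `cl(E − S) = X` and `|E − S| = k`. -/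
def PXk (Δ : ι → MvPolynomial σ K) (X : Finset ι) (k : ℕ) :
    Submodule K (MvPolynomial σ K) :=
  span K {p | ∃ S : Finset ι,
    clos Δ (univ \ S) = X ∧ (univ \ S).card = k ∧ p = prodForms Δ S}

/-- `P(Δ)_{j,k}`: span of the `α_S` with `r(E − S) = j` and `|E − S| = k`. -/
def Pjk (Δ : ι → MvPolynomial σ K) (j k : ℕ) : Submodule K (MvPolynomial σ K) :=
  span K {p | ∃ S : Finset ι,
    rk Δ (univ \ S) = j ∧ (univ \ S).card = k ∧ p = prodForms Δ S}

/-- The Tutte polynomial in its corank–nullity form,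
`T = ∑_{S ⊆ E} (x−1)^{r(E)−r(S)} (y−1)^{|S|−r(S)}`, evaluated at elements `x`, `y` of a
commutative ring, for a finite ground set `α` with rank function `r`. -/
def tutteEval {α : Type*} [Fintype α] [DecidableEq α] {R : Type*} [CommRing R]
    (r : Finset α → ℕ) (x y : R) : R :=
  ∑ S : Finset α, (x - 1) ^ (r Finset.univ - r S) * (y - 1) ^ (S.card - r S)

/-- `S` is independent in `M(Δ)`. -/
def Indep (Δ : ι → MvPolynomial σ K) (S : Finset ι) : Prop := rk Δ S = S.card

/-- `C` is a circuit of `M(Δ)`: a minimal dependent set. -/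
def IsCircuit (Δ : ι → MvPolynomial σ K) (C : Finset ι) : Prop :=
  ¬ Indep Δ C ∧ ∀ i ∈ C, Indep Δ (C.erase i)

/-- `e` is externally active in `I`: it is the smallest element of a circuit
contained in `I ∪ {e}`. -/
def ExtAct [LinearOrder ι] (Δ : ι → MvPolynomial σ K) (I : Finset ι) (e : ι) : Prop :=
  ∃ C : Finset ι, IsCircuit Δ C ∧ C ⊆ insert e I ∧ e ∈ C ∧ ∀ f ∈ C, e ≤ f

/-- `ex(I)`: the set of externally active elements of `I`. -/
def exSet [LinearOrder ι] (Δ : ι → MvPolynomial σ K) (I : Finset ι) : Finset ι :=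
  Finset.univ.filter (ExtAct Δ I)

/-- `S` contains no broken circuit. -/
def NBC [LinearOrder ι] (Δ : ι → MvPolynomial σ K) (S : Finset ι) : Prop :=
  ∀ C : Finset ι, ∀ e, IsCircuit Δ C → e ∈ C → (∀ f ∈ C, e ≤ f) → ¬ C.erase e ⊆ S

end
section Helpers

variable {K : Type*} [Field K] {ℓ n : ℕ}

private lemma fd_span (Δ : Fin n → MvPolynomial (Fin ℓ) K) (S : Finset (Fin n)) :
    FiniteDimensional K (span K (Δ '' (S : Set (Fin n)))) :=
  FiniteDimensional.span_of_finite K (S.finite_toSet.image Δ)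


private lemma erasec (inst : DecidableEq (Fin n)) (s : Finset (Fin n)) (a : Fin n) :
    @Finset.erase (Fin n) inst s a = @Finset.erase (Fin n) (instDecidableEqFin n) s a := by
  rw [Subsingleton.elim inst (instDecidableEqFin n)]

private lemma insertc (inst : DecidableEq (Fin n)) (a : Fin n) (s : Finset (Fin n)) :
    @Insert.insert (Fin n) (Finset (Fin n)) (@Finset.instInsert (Fin n) inst) a s
      = @Insert.insert (Fin n) (Finset (Fin n)) (@Finset.instInsert (Fin n) (instDecidableEqFin n)) a s := by
  rw [Subsingleton.elim inst (instDecidableEqFin n)]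

private lemma rk_le_card (Δ : Fin n → MvPolynomial (Fin ℓ) K) (S : Finset (Fin n)) :
    rk Δ S ≤ S.card := by
  rw [rk, ← Finset.coe_image]
  exact le_trans (finrank_span_finset_le_card (S.image Δ)) Finset.card_image_le

private lemma rk_mono (Δ : Fin n → MvPolynomial (Fin ℓ) K) {S S' : Finset (Fin n)}
    (h : S ⊆ S') : rk Δ S ≤ rk Δ S' := by
  haveI := fd_span Δ S'
  exact Submodule.finrank_mono (span_mono (Set.image_mono (by exact_mod_cast h)))

private lemma finrank_sup_le' (p q : Submodule K (MvPolynomial (Fin ℓ) K))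
    [FiniteDimensional K p] [FiniteDimensional K q] :
    Module.finrank K ↥(p ⊔ q) ≤ Module.finrank K p + Module.finrank K q := by
  have := Submodule.finrank_sup_add_finrank_inf_eq p q
  omega

private lemma rk_insert_of_not_mem_span (Δ : Fin n → MvPolynomial (Fin ℓ) K)
    {S : Finset (Fin n)} {e : Fin n}
    (h : Δ e ∉ span K (Δ '' (S : Set (Fin n)))) :
    rk Δ (insert e S) = rk Δ S + 1 := by
  haveI := fd_span Δ S
  haveI := fd_span Δ (insert e S)
  have hne : Δ e ≠ 0 := fun h0 => h (h0 ▸ (span K _).zero_mem)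
  have hins : (Δ '' ((insert e S : Finset (Fin n)) : Set (Fin n)))
      = insert (Δ e) (Δ '' (S : Set (Fin n))) := by
    rw [Finset.coe_insert, Set.image_insert_eq]
  have hle : rk Δ (insert e S) ≤ rk Δ S + 1 := by
    rw [rk, hins, Submodule.span_insert]
    haveI : FiniteDimensional K (span K {Δ e}) :=
      FiniteDimensional.span_of_finite K (Set.finite_singleton _)
    refine le_trans (finrank_sup_le' _ _) ?_
    rw [finrank_span_singleton hne]
    simp [rk, add_comm]
  have hlt : rk Δ S < rk Δ (insert e S) := by
    rw [rk, rk]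
    apply Submodule.finrank_lt_finrank_of_lt
    refine lt_of_le_of_ne (span_mono (Set.image_mono (by
      exact_mod_cast Finset.subset_insert e S))) ?_
    intro heq
    apply h
    rw [heq]
    exact subset_span (hins ▸ Set.mem_insert (Δ e) _)
  omega

private lemma indep_mono (Δ : Fin n → MvPolynomial (Fin ℓ) K) {S S' : Finset (Fin n)}
    (h : S ⊆ S') (h' : Indep Δ S') : Indep Δ S := by
  haveI := fd_span Δ S
  haveI := fd_span Δ (S' \ S)
  have key : rk Δ S' ≤ rk Δ S + (S' \ S).card := by
    have hunion : S ∪ S' \ S = S' := Finset.union_sdiff_of_subset h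
    have h0 : rk Δ S' = Module.finrank K
        ↥(span K (Δ '' (S : Set (Fin n))) ⊔ span K (Δ '' ((S' \ S : Finset (Fin n)) : Set (Fin n)))) := by
      conv_lhs => rw [← hunion]
      rw [rk, Finset.coe_union, Set.image_union, Submodule.span_union]
    rw [h0]
    refine le_trans (finrank_sup_le' _ _) ?_
    exact add_le_add le_rfl (rk_le_card Δ _)
  have h1 := rk_le_card Δ S
  have h2 : (S' \ S).card + S.card = S'.card := Finset.card_sdiff_add_card_eq_card h
  unfold Indep at *
  omega

private lemma indep_triangular (Δ : Fin n → MvPolynomial (Fin ℓ) K) :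
    ∀ (m : ℕ) (I : Finset (Fin n)), I.card ≤ m →
      (∀ i ∈ I, Δ i ∉ span K (Δ '' ((I.filter (fun j => i < j) : Finset (Fin n)) : Set (Fin n)))) →
      Indep Δ I := by
  intro m
  induction m with
  | zero =>
    intro I hI _
    have : I = ∅ := Finset.card_eq_zero.1 (Nat.le_zero.1 hI)
    subst this
    unfold Indep rk
    rw [Finset.coe_empty, Set.image_empty, Submodule.span_empty]
    simp
  | succ m ih =>
    intro I hI hyp
    rcases I.eq_empty_or_nonempty with rfl | hne
    · unfold Indep rk
      rw [Finset.coe_empty, Set.image_empty, Submodule.span_empty]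
      simp
    · set i0 := I.min' hne with hi0
      have hi0I : i0 ∈ I := I.min'_mem hne
      have herase_sub : I.erase i0 ⊆ I.filter (fun j => i0 < j) := by
        intro j hj
        rw [Finset.mem_filter]
        exact ⟨Finset.mem_of_mem_erase hj,
          lt_of_le_of_ne (I.min'_le j (Finset.mem_of_mem_erase hj))
            (Ne.symm (Finset.ne_of_mem_erase hj))⟩
      have hnotmem : Δ i0 ∉ span K (Δ '' ((I.erase i0 : Finset (Fin n)) : Set (Fin n))) := by
        intro hc
        exact hyp i0 hi0I (span_mono (Set.image_mono (by exact_mod_cast herase_sub)) hc)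
      have hIndErase : Indep Δ (I.erase i0) := by
        apply ih
        · have := Finset.card_erase_of_mem hi0I
          omega
        · intro i hi hc
          apply hyp i (Finset.mem_of_mem_erase hi)
          refine span_mono (Set.image_mono ?_) hc
          exact_mod_cast Finset.filter_subset_filter _ (Finset.erase_subset _ _)
      have hins : insert i0 (I.erase i0) = I := Finset.insert_erase hi0I
      have hrk : rk Δ I = rk Δ (I.erase i0) + 1 := by
        conv_lhs => rw [← hins]
        exact rk_insert_of_not_mem_span Δ hnotmem
      unfold Indep at *
      rw [hrk, hIndErase, Finset.card_erase_of_mem hi0I]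
      have : 0 < I.card := Finset.card_pos.2 hne
      omega

private lemma circuit_mem_span (Δ : Fin n → MvPolynomial (Fin ℓ) K) {C : Finset (Fin n)}
    {e : Fin n} (hC : IsCircuit Δ C) (he : e ∈ C) :
    Δ e ∈ span K (Δ '' ((C.erase e : Finset (Fin n)) : Set (Fin n))) := by
  obtain ⟨hdep, hmin⟩ := hC
  have h1 : Indep Δ (C.erase e) := by
    have h1' := hmin e he
    rwa [erasec] at h1'
  have h2 := rk_le_card Δ C
  have h3 := rk_mono Δ (Finset.erase_subset e C)
  have hcard := Finset.card_erase_of_mem he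
  have hpos : 0 < C.card := Finset.card_pos.2 ⟨e, he⟩
  have h4 : rk Δ C ≠ C.card := hdep
  haveI := fd_span Δ C
  have heq : span K (Δ '' ((C.erase e : Finset (Fin n)) : Set (Fin n)))
      = span K (Δ '' (C : Set (Fin n))) := by
    apply Submodule.eq_of_le_of_finrank_le
    · exact span_mono (Set.image_mono (by exact_mod_cast Finset.erase_subset e C))
    · unfold Indep at h1
      unfold rk at *
      omega
  rw [heq]
  exact subset_span ⟨e, by exact_mod_cast he, rfl⟩

/-- The reverse-greedy independent subset of `T`. -/
private noncomputable def greedy (Δ : Fin n → MvPolynomial (Fin ℓ) K)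
    (T : Finset (Fin n)) : Finset (Fin n) :=
  T.filter fun i => Δ i ∉ span K (Δ '' ((T.filter fun j => i < j : Finset (Fin n)) : Set (Fin n)))

private lemma descent (Δ : Fin n → MvPolynomial (Fin ℓ) K) (T : Finset (Fin n)) :
    ∀ (m : ℕ) (j : Fin n), n - j.val ≤ m → j ∈ T →
      Δ j ∈ span K (Δ '' (((greedy Δ T).filter (fun i => j ≤ i) : Finset (Fin n)) : Set (Fin n))) := by
  intro m
  induction m with
  | zero =>
    intro j hj _
    have := j.isLt
    omega
  | succ m ih =>
    intro j hj hjT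
    by_cases hjI : j ∈ greedy Δ T
    · exact subset_span
        (Set.mem_image_of_mem Δ (Finset.mem_coe.2 (Finset.mem_filter.2 ⟨hjI, le_refl j⟩)))
    · have hmem : Δ j ∈ span K (Δ '' ((T.filter fun k => j < k : Finset (Fin n)) : Set (Fin n))) := by
        by_contra hc
        exact hjI (Finset.mem_filter.2 ⟨hjT, hc⟩)
      refine span_le.2 ?_ hmem
      rintro x ⟨t, ht, rfl⟩
      rw [Finset.mem_coe, Finset.mem_filter] at ht
      obtain ⟨htT, hjt⟩ := ht
      have hbound : n - t.val ≤ m := by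
        have := t.isLt
        have : j.val < t.val := hjt
        omega
      refine span_mono (Set.image_mono ?_) (ih t hbound htT)
      have : (greedy Δ T).filter (fun i => t ≤ i) ⊆ (greedy Δ T).filter (fun i => j ≤ i) := by
        apply Finset.monotone_filter_right
        intro i _ hti
        exact le_trans (le_of_lt hjt) hti
      exact_mod_cast this

private lemma saturated_decomp (Δ : Fin n → MvPolynomial (Fin ℓ) K) (T : Finset (Fin n))
    (hsat : ∀ e : Fin n, ExtAct Δ T e → e ∈ T) :
    ∃ I : Finset (Fin n), Indep Δ I ∧ I ∪ exSet Δ I = T := by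
  set I := greedy Δ T with hIdef
  have hIT : I ⊆ T := Finset.filter_subset _ _
  have hInd : Indep Δ I := by
    apply indep_triangular Δ I.card I le_rfl
    intro i hi hc
    have h2 := (Finset.mem_filter.1 hi).2
    apply h2
    refine span_mono (Set.image_mono ?_) hc
    exact_mod_cast Finset.filter_subset_filter _ hIT
  have hTsub : ∀ e ∈ T, e ∉ I → ExtAct Δ I e := by
    intro e heT heI
    have h0 : Δ e ∈ span K (Δ '' ((I.filter (fun i => e < i) : Finset (Fin n)) : Set (Fin n))) := by
      have hdes := descent Δ T n e (by omega) heT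
      have hfe : (I.filter fun i => e ≤ i) = I.filter fun i => e < i := by
        apply Finset.filter_congr
        intro i hiI
        constructor
        · intro h
          exact lt_of_le_of_ne h (fun h' => heI (h' ▸ hiI))
        · exact le_of_lt
      rwa [← hIdef, hfe] at hdes
    set Ige := I.filter (fun i => e < i) with hIge
    obtain ⟨J, hJmem, hJmin⟩ := Finset.exists_min_image
      (Ige.powerset.filter (fun J => Δ e ∈ span K (Δ '' ((J : Finset (Fin n)) : Set (Fin n)))))
      Finset.card ⟨Ige, Finset.mem_filter.2 ⟨Finset.mem_powerset_self _, h0⟩⟩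
    have hJsub : J ⊆ Ige := Finset.mem_powerset.1 (Finset.mem_filter.1 hJmem).1
    have hJspan : Δ e ∈ span K (Δ '' ((J : Finset (Fin n)) : Set (Fin n))) :=
      (Finset.mem_filter.1 hJmem).2
    have hemin : ∀ f ∈ J, e < f := fun f hf => (Finset.mem_filter.1 (hJsub hf)).2
    have heJ : e ∉ J := fun h => lt_irrefl e (hemin e h)
    have hminimal : ∀ f ∈ J, Δ e ∉ span K (Δ '' ((J.erase f : Finset (Fin n)) : Set (Fin n))) := by
      intro f hf hc
      have hmem' : J.erase f ∈ Ige.powerset.filter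
          (fun J' => Δ e ∈ span K (Δ '' ((J' : Finset (Fin n)) : Set (Fin n)))) :=
        Finset.mem_filter.2 ⟨Finset.mem_powerset.2 ((Finset.erase_subset f J).trans hJsub), hc⟩
      have h5 := hJmin _ hmem'
      have h6 := Finset.card_erase_of_mem hf
      have h7 : 0 < J.card := Finset.card_pos.2 ⟨f, hf⟩
      omega
    have hJI : J ⊆ I := hJsub.trans (Finset.filter_subset _ _)
    have hIndJ : Indep Δ J := indep_mono Δ hJI hInd
    refine ⟨insert e J, ⟨?_, ?_⟩, ?_, Finset.mem_insert_self e J, ?_⟩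
    · -- not independent
      intro hbad
      have hspanIns : span K (Δ '' ((insert e J : Finset (Fin n)) : Set (Fin n)))
          = span K (Δ '' ((J : Finset (Fin n)) : Set (Fin n))) := by
        rw [Finset.coe_insert, Set.image_insert_eq]
        exact Submodule.span_insert_eq_span hJspan
      have h8 : rk Δ (insert e J) = rk Δ J := by rw [rk, rk, hspanIns]
      have h9 := rk_le_card Δ J
      have h10 : (insert e J).card = J.card + 1 := Finset.card_insert_of_notMem heJ
      unfold Indep at hbad
      omega
    · -- minors independent
      intro f hf
      rw [erasec]
      rcases Finset.mem_insert.1 hf with rfl | hfJ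
      · rwa [Finset.erase_insert heJ]
      · have hne : e ≠ f := ne_of_lt (hemin f hfJ)
        rw [Finset.erase_insert_of_ne hne]
        have hIndE : Indep Δ (J.erase f) := indep_mono Δ (Finset.erase_subset f J) hIndJ
        have hrk : rk Δ (insert e (J.erase f)) = rk Δ (J.erase f) + 1 :=
          rk_insert_of_not_mem_span Δ (hminimal f hfJ)
        have heJE : e ∉ J.erase f := fun h => heJ (Finset.mem_of_mem_erase h)
        unfold Indep at *
        rw [hrk, hIndE, Finset.card_insert_of_notMem heJE]
    · simp only [insertc]
      exact Finset.insert_subset_insert e hJI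
    · intro f hf
      rcases Finset.mem_insert.1 hf with rfl | hfJ
      · exact le_refl f
      · exact le_of_lt (hemin f hfJ)
  have hback : ∀ e, ExtAct Δ I e → e ∈ T := by
    rintro e ⟨C, hC, hCs, heC, hm⟩
    simp only [insertc] at hCs
    refine hsat e ⟨C, hC, ?_, heC, hm⟩
    simp only [insertc]
    exact hCs.trans (Finset.insert_subset_insert e hIT)
  refine ⟨I, hInd, ?_⟩
  ext x
  simp only [Finset.mem_union]
  constructor
  · rintro (hx | hx)
    · exact hIT hx
    · exact hback x (Finset.mem_filter.1 hx).2
  · intro hx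
    by_cases hxI : x ∈ I
    · exact Or.inl hxI
    · exact Or.inr (Finset.mem_filter.2 ⟨Finset.mem_univ x, hTsub x hx hxI⟩)

private lemma main_span (Δ : Fin n → MvPolynomial (Fin ℓ) K) :
    ∀ (m : ℕ) (S : Finset (Fin n)), (∑ i ∈ S, (n - i.val)) ≤ m →
      prodForms Δ S ∈ span K {p | ∃ I : Finset (Fin n), Indep Δ I ∧
        p = prodForms Δ (Finset.univ \ (I ∪ exSet Δ I))} := by
  intro m
  induction m using Nat.strong_induction_on with
  | _ m ih =>
    intro S hS
    by_cases hsat : ∀ e : Fin n, ExtAct Δ (Finset.univ \ S) e → e ∈ Finset.univ \ S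
    · obtain ⟨I, hInd, hTeq⟩ := saturated_decomp Δ (Finset.univ \ S) hsat
      apply subset_span
      refine ⟨I, hInd, ?_⟩
      rw [hTeq, Finset.sdiff_sdiff_self_left, Finset.univ_inter]
    · push_neg at hsat
      obtain ⟨e, ⟨C, hC, hCsub, heC, hmin⟩, heT⟩ := hsat
      simp only [insertc] at hCsub
      have heS : e ∈ S := by
        by_contra h
        exact heT (Finset.mem_sdiff.2 ⟨Finset.mem_univ e, h⟩)
      have hDsub : C.erase e ⊆ Finset.univ \ S := by
        intro f hf
        rcases Finset.mem_insert.1 (hCsub (Finset.mem_of_mem_erase hf)) with rfl | h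
        · exact absurd rfl (Finset.ne_of_mem_erase hf)
        · exact h
      have hspanE := circuit_mem_span Δ hC heC
      rw [← Finset.coe_image] at hspanE
      obtain ⟨c, hc⟩ := mem_span_finset.1 hspanE
      have hprod : prodForms Δ S
          = ∑ g ∈ (C.erase e).image Δ, c g • (g * prodForms Δ (S.erase e)) := by
        have h1 : prodForms Δ S = Δ e * prodForms Δ (S.erase e) :=
          (Finset.mul_prod_erase S Δ heS).symm
        rw [h1, ← hc.2, Finset.sum_mul]
        apply Finset.sum_congr rfl
        intro g _
        rw [smul_mul_assoc]
      rw [hprod]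
      apply Submodule.sum_mem
      intro g hg
      apply Submodule.smul_mem
      obtain ⟨f, hf, rfl⟩ := Finset.mem_image.1 hg
      have hfT := hDsub hf
      have hfS : f ∉ S := (Finset.mem_sdiff.1 hfT).2
      have hef : e < f :=
        lt_of_le_of_ne (hmin f (Finset.mem_of_mem_erase hf)) (Ne.symm (Finset.ne_of_mem_erase hf))
      have hfS' : f ∉ S.erase e := fun h => hfS (Finset.mem_of_mem_erase h)
      have hins : Δ f * prodForms Δ (S.erase e) = prodForms Δ (insert f (S.erase e)) :=
        (Finset.prod_insert hfS').symm
      rw [hins]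
      have hsum1 : (n - e.val) + ∑ i ∈ S.erase e, (n - i.val) = ∑ i ∈ S, (n - i.val) :=
        Finset.add_sum_erase S (fun i => n - i.val) heS
      have hsum2 : (∑ i ∈ insert f (S.erase e), (n - i.val))
          = (n - f.val) + ∑ i ∈ S.erase e, (n - i.val) := Finset.sum_insert hfS'
      have hflt : f.val < n := f.isLt
      have helt : e.val < f.val := hef
      exact ih (∑ i ∈ insert f (S.erase e), (n - i.val)) (by omega) _ le_rfl

end Helpers

/-- the products `α_{E−(I ∪ ex(I))}`, for `I` ranging over the
independent sets of `M(Δ)`, span `P(Δ)`. -/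
theorem statement13 {K : Type*} [Field K] {ℓ n : ℕ}
    (Δ : Fin n → MvPolynomial (Fin ℓ) K)
    (hdeg : ∀ i, Δ i ∈ homogeneousSubmodule (Fin ℓ) K 1)
    (hspan : homogeneousSubmodule (Fin ℓ) K 1 ≤ span K (Set.range Δ)) :
    span K {p | ∃ I : Finset (Fin n), Indep Δ I ∧
        p = prodForms Δ (Finset.univ \ (I ∪ exSet Δ I))} =
      Pspace Δ := by
  apply le_antisymm
  · apply span_le.2
    rintro p ⟨I, hI, rfl⟩
    exact subset_span ⟨Finset.univ \ (I ∪ exSet Δ I), rfl⟩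
  · rw [Pspace]
    apply span_le.2
    rintro p ⟨S, rfl⟩
    exact main_span Δ _ S le_rfl
end

section
/- (Crapo) Let M be a matroid on a linearly ordered finite set E. Every subset S ⊆ E can be written uniquely in the form S = (B − I) ∪ J, where B is a basis of M, I ⊆ in(B) is a set of internally active elements of B, and J ⊆ ex(B) is a set of externally active elements of B. -/
open Finset
open scoped Classical

noncomputable section

variable {β : Type*} [Fintype β]

/-- The (ℕ-valued) rank of a set in a matroid: the maximal size of an independent
subset. -/
def mrank (M : Matroid β) (S : Finset β) : ℕ :=
  sSup {c | ∃ I : Finset β, I ⊆ S ∧ M.Indep ↑I ∧ I.card = c}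

/-- `C` is a circuit of `M`: a minimal dependent set. -/
def MIsCircuit {α : Type*} (M : Matroid α) (C : Set α) : Prop :=
  M.Dep C ∧ ∀ e ∈ C, M.Indep (C \ {e})

/-- `ex(I)`: the externally active elements of `I`, i.e. the elements `e` that are
smallest in some circuit contained in `I ∪ {e}`. -/
def mexSet {α : Type*} [LinearOrder α] (M : Matroid α) (I : Set α) : Set α :=
  {e | ∃ C, MIsCircuit M C ∧ C ⊆ insert e I ∧ e ∈ C ∧ ∀ f ∈ C, e ≤ f}

/-- `in(B)`: the internally active elements of the basis `B`, i.e. the elements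
`e ∈ B` that are smallest in some cocircuit contained in `E − (B − e)`. -/
def minSet {α : Type*} [LinearOrder α] (M : Matroid α) (B : Set α) : Set α :=
  {e | e ∈ B ∧ ∃ D, MIsCircuit M✶ D ∧ D ⊆ (M.E \ B) ∪ {e} ∧ e ∈ D ∧ ∀ f ∈ D, e ≤ f}

end
section CrapoHelpers

variable {α : Type*}

private lemma crapo_sub_ground {N : Matroid α} (hE : N.E = Set.univ) (X : Set α) : X ⊆ N.E := by
  rw [hE]; exact Set.subset_univ _

private lemma crapo_base_insert {N : Matroid α} (hE : N.E = Set.univ) {B : Set α}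
    (hB : N.IsBase B) {f b : α} (hf : f ∉ B) (hb : b ∈ B) {X : Set α} (hX : X ⊆ B \ {b})
    (h : b ∈ N.closure (insert f X)) : N.IsBase (insert f (B \ {b})) := by
  have hBb : N.Indep (B \ {b}) := hB.indep.subset Set.diff_subset
  have hfBb : f ∉ B \ {b} := fun h' => hf h'.1
  by_cases hcl : f ∈ N.closure (B \ {b})
  · exfalso
    have hsub : insert f X ⊆ N.closure (B \ {b}) :=
      Set.insert_subset hcl (hX.trans (N.subset_closure _ (crapo_sub_ground hE _)))
    have h2 : b ∈ N.closure (B \ {b}) :=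
      (N.closure_subset_closure_of_subset_closure hsub) h
    have h3 : b ∉ N.closure (B \ {b}) := by
      rw [hBb.notMem_closure_iff (by rw [hE]; trivial)]
      constructor
      · rw [Set.insert_diff_singleton, Set.insert_eq_of_mem hb]; exact hB.indep
      · exact fun h' => h'.2 rfl
    exact h3 h2
  · exact hB.exchange_isBase_of_indep hf
      ((hBb.insert_indep_iff_of_notMem hfBb).mpr ⟨by rw [hE]; trivial, hcl⟩)

private lemma crapo_fund_circuit [Fintype α] {N : Matroid α} (hE : N.E = Set.univ)
    {B : Set α} (hB : N.IsBase B) {f : α} (hf : f ∉ B) :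
    MIsCircuit N (insert f {x ∈ B | N.IsBase (insert f (B \ {x}))}) := by
  classical
  have hfE : f ∈ N.E := by rw [hE]; trivial
  have hfclB : f ∈ N.closure B := by rw [hB.closure_eq]; exact hfE
  obtain ⟨A₀, hA₀mem, hA₀min⟩ :=
    Finset.exists_min_image
      (Finset.univ.filter fun A : Finset α => ↑A ⊆ B ∧ f ∈ N.closure ↑A)
      Finset.card
      ⟨B.toFinset, by
        simp only [Finset.mem_filter, Finset.mem_univ, true_and, Set.coe_toFinset]
        exact ⟨subset_rfl, hfclB⟩⟩
  rw [Finset.mem_filter] at hA₀mem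
  set C₀ : Set α := ↑A₀ with hC₀def
  have hC₀B : C₀ ⊆ B := hA₀mem.2.1
  have hfclC₀ : f ∈ N.closure C₀ := hA₀mem.2.2
  have hfC₀ : f ∉ C₀ := fun h => hf (hC₀B h)
  have hmin : ∀ b ∈ C₀, f ∉ N.closure (C₀ \ {b}) := by
    intro b hb hcon
    have hbA₀ : b ∈ A₀ := hb
    have hmem : A₀.erase b ∈
        Finset.univ.filter fun A : Finset α => ↑A ⊆ B ∧ f ∈ N.closure ↑A := by
      rw [Finset.mem_filter, Finset.coe_erase]
      exact ⟨Finset.mem_univ _, Set.diff_subset.trans hC₀B, hcon⟩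
    have h1 := hA₀min _ hmem
    have h2 := Finset.card_erase_lt_of_mem hbA₀
    omega
  have hset : {x ∈ B | N.IsBase (insert f (B \ {x}))} = C₀ := by
    apply Set.Subset.antisymm
    · rintro b ⟨hbB, hbase⟩
      by_contra hbC
      have hC₀sub : C₀ ⊆ B \ {b} := fun x hx => ⟨hC₀B hx, fun hxb => hbC (hxb ▸ hx)⟩
      have h1 : f ∈ N.closure (B \ {b}) := N.closure_subset_closure hC₀sub hfclC₀
      have h2 : f ∉ N.closure (B \ {b}) :=
        (((hB.indep.subset Set.diff_subset).insert_indep_iff_of_notMem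
          (fun h' => hf h'.1)).mp hbase.indep).2
      exact h2 h1
    · intro b hb
      have hbB : b ∈ B := hC₀B hb
      have h1 : f ∈ N.closure (insert b (C₀ \ {b})) := by
        rwa [Set.insert_diff_singleton, Set.insert_eq_of_mem hb]
      have h3 := Matroid.closure_exchange (M := N) (X := C₀ \ {b}) ⟨h1, hmin b hb⟩
      exact ⟨hbB, crapo_base_insert hE hB hf hbB (Set.diff_subset_diff_left hC₀B) h3.1⟩
  rw [hset]
  have hC₀indep : N.Indep C₀ := hB.indep.subset hC₀B
  constructor
  · exact hC₀indep.insert_dep_iff.mpr ⟨hfclC₀, hfC₀⟩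
  · intro e he
    rcases Set.mem_insert_iff.mp he with rfl | heC₀
    · rw [Set.insert_diff_self_of_notMem hfC₀]; exact hC₀indep
    · have hfe : f ≠ e := fun h => hfC₀ (h ▸ heC₀)
      rw [← Set.insert_diff_singleton_comm hfe]
      have hbase : N.IsBase (insert f (B \ {e})) := (hset.symm ▸ heC₀ :
        e ∈ {x ∈ B | N.IsBase (insert f (B \ {x}))}).2
      exact hbase.indep.subset
        (Set.insert_subset_insert (Set.diff_subset_diff_left hC₀B))

private lemma crapo_circuit_eq_fund {N : Matroid α} (hE : N.E = Set.univ)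
    {B : Set α} (hB : N.IsBase B) {f : α} (hf : f ∉ B) {C : Set α}
    (hC : MIsCircuit N C) (hCs : C ⊆ insert f B) :
    C = insert f {x ∈ B | N.IsBase (insert f (B \ {x}))} := by
  have hfC : f ∈ C := by
    by_contra hfC
    have hCB : C ⊆ B := fun x hx =>
      (Set.mem_insert_iff.mp (hCs hx)).resolve_left (fun h => hfC (h ▸ hx))
    exact hC.1.not_indep (hB.indep.subset hCB)
  have hCfB : C \ {f} ⊆ B := fun x hx =>
    (Set.mem_insert_iff.mp (hCs hx.1)).resolve_left hx.2
  have hCf : N.Indep (C \ {f}) := hC.2 f hfC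
  have hCeq : insert f (C \ {f}) = C := by
    rw [Set.insert_diff_singleton, Set.insert_eq_of_mem hfC]
  have hfcl : f ∈ N.closure (C \ {f}) := by
    have hdep : N.Dep (insert f (C \ {f})) := by rw [hCeq]; exact hC.1
    exact (hCf.insert_dep_iff.mp hdep).1
  apply Set.Subset.antisymm
  · intro b hbC
    rcases eq_or_ne b f with rfl | hbf
    · exact Set.mem_insert _ _
    have hbB : b ∈ B := hCfB ⟨hbC, hbf⟩
    have hXB : (C \ {f}) \ {b} ⊆ B \ {b} := Set.diff_subset_diff_left hCfB
    have h1 : f ∈ N.closure (insert b ((C \ {f}) \ {b})) := by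
      rw [Set.insert_diff_singleton]
      exact N.closure_subset_closure (Set.subset_insert _ _) hfcl
    have h2 : f ∉ N.closure ((C \ {f}) \ {b}) := by
      have hm : f ∈ C \ {b} := Set.mem_diff_singleton.mpr ⟨hfC, fun h => hbf h.symm⟩
      have heq : insert f ((C \ {f}) \ {b}) = C \ {b} := by
        rw [Set.diff_diff_comm, Set.insert_diff_singleton, Set.insert_eq_of_mem hm]
      have hind : N.Indep (insert f ((C \ {f}) \ {b})) := by
        rw [heq]; exact hC.2 b hbC
      have hfX : f ∉ (C \ {f}) \ {b} := fun h => h.1.2 rfl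
      exact fun hcl =>
        (((hCf.subset Set.diff_subset).insert_indep_iff_of_notMem hfX).mp hind).2 hcl
    have h3 := Matroid.closure_exchange (M := N) (X := (C \ {f}) \ {b}) ⟨h1, h2⟩
    exact Set.mem_insert_of_mem _ ⟨hbB, crapo_base_insert hE hB hf hbB hXB h3.1⟩
  · intro x hx
    rcases Set.mem_insert_iff.mp hx with rfl | hx'
    · exact hfC
    obtain ⟨hxB, hxbase⟩ := hx'
    by_contra hxC
    have hsub : C ⊆ insert f (B \ {x}) := by
      intro y hy
      rcases Set.mem_insert_iff.mp (hCs hy) with rfl | h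
      · exact Set.mem_insert _ _
      · exact Set.mem_insert_of_mem _ ⟨h, fun hyx => hxC (hyx ▸ hy)⟩
    exact hC.1.not_indep (hxbase.indep.subset hsub)

private lemma crapo_dual_exch_set {M : Matroid α} (hE : M.E = Set.univ) {B : Set α}
    {b : α} (hb : b ∈ B) :
    {x ∈ Bᶜ | M✶.IsBase (insert b (Bᶜ \ {x}))} =
      {x | x ∉ B ∧ M.IsBase (insert x (B \ {b}))} := by
  ext x
  simp only [Set.mem_setOf_eq, Set.mem_sep_iff, Set.mem_compl_iff]
  refine and_congr_right fun hx => ?_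
  have hxb : x ≠ b := fun h => hx (h ▸ hb)
  have hsub : insert b (Bᶜ \ {x}) ⊆ M.E := by
    rw [hE]; exact Set.subset_univ _
  rw [Matroid.dual_isBase_iff hsub, hE]
  have hcompl : Set.univ \ insert b (Bᶜ \ {x}) = insert x (B \ {b}) := by
    ext y
    simp only [Set.mem_diff, Set.mem_univ, true_and, Set.mem_insert_iff, Set.mem_compl_iff,
      Set.mem_singleton_iff]
    constructor
    · intro h
      by_cases hyB : y ∈ B
      · exact Or.inr ⟨hyB, fun hyb => h (Or.inl hyb)⟩
      · by_cases h' : y = x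
        · exact Or.inl h'
        · exact absurd (Or.inr ⟨hyB, h'⟩) h
    · rintro (rfl | ⟨hyB, hyb⟩)
      · rintro (h | ⟨h1, h2⟩)
        · exact hxb h
        · exact h2 rfl
      · rintro (h | ⟨h1, h2⟩)
        · exact hyb h
        · exact h1 hyB
  rw [hcompl]

private lemma crapo_dual_base_compl {M : Matroid α} (hE : M.E = Set.univ) {B : Set α}
    (hB : M.IsBase B) : M✶.IsBase Bᶜ := by
  have := hB.compl_isBase_dual
  rwa [hE, ← Set.compl_eq_univ_diff] at this

private lemma crapo_fund_cocircuit [Fintype α] {M : Matroid α} (hE : M.E = Set.univ)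
    {B : Set α} (hB : M.IsBase B) {b : α} (hb : b ∈ B) :
    MIsCircuit M✶ (insert b {x | x ∉ B ∧ M.IsBase (insert x (B \ {b}))}) := by
  have hE' : M✶.E = Set.univ := by rw [Matroid.dual_ground, hE]
  have hbBc : b ∉ Bᶜ := by simp [hb]
  have := crapo_fund_circuit hE' (crapo_dual_base_compl hE hB) hbBc
  rwa [crapo_dual_exch_set hE hb] at this

private lemma crapo_cocircuit_eq_fund {M : Matroid α} (hE : M.E = Set.univ)
    {B : Set α} (hB : M.IsBase B) {b : α} (hb : b ∈ B) {D : Set α}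
    (hD : MIsCircuit M✶ D) (hDs : D ⊆ insert b Bᶜ) :
    D = insert b {x | x ∉ B ∧ M.IsBase (insert x (B \ {b}))} := by
  have hE' : M✶.E = Set.univ := by rw [Matroid.dual_ground, hE]
  have hbBc : b ∉ Bᶜ := by simp [hb]
  have := crapo_circuit_eq_fund hE' (crapo_dual_base_compl hE hB) hbBc hD hDs
  rwa [crapo_dual_exch_set hE hb] at this

end CrapoHelpers
section CrapoWeights

variable {α : Type*} [Fintype α] [LinearOrder α]

private def crapoPref (S : Set α) (p q : α) : Prop :=
  (p ∉ S ∧ q ∈ S) ∨ (p ∈ S ∧ q ∈ S ∧ p ≤ q) ∨ (p ∉ S ∧ q ∉ S ∧ q ≤ p)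

private lemma crapoPref_refl (S : Set α) (x : α) : crapoPref S x x := by
  by_cases h : x ∈ S <;> simp [crapoPref, h]

private lemma crapoPref_trans {S : Set α} {p q r : α}
    (h1 : crapoPref S p q) (h2 : crapoPref S q r) : crapoPref S p r := by
  unfold crapoPref at h1 h2 ⊢
  rcases h1 with ⟨h1a, h1b⟩ | ⟨h1a, h1b, h1c⟩ | ⟨h1a, h1b, h1c⟩ <;>
    rcases h2 with ⟨h2a, h2b⟩ | ⟨h2a, h2b, h2c⟩ | ⟨h2a, h2b, h2c⟩ <;>
      first
        | tauto
        | exact Or.inr (Or.inl ⟨h1a, h2b, le_trans h1c h2c⟩)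
        | exact Or.inr (Or.inr ⟨h1a, h2b, le_trans h2c h1c⟩)

private noncomputable def crapoW (S : Set α) (x : α) : ℕ :=
  (Finset.univ.filter fun y => crapoPref S y x).card

private lemma crapoW_lt {S : Set α} {x y : α}
    (h1 : crapoPref S x y) (h2 : ¬ crapoPref S y x) : crapoW S x < crapoW S y := by
  apply Finset.card_lt_card
  have hsub : (Finset.univ.filter fun z => crapoPref S z x) ⊆
      Finset.univ.filter fun z => crapoPref S z y :=
    Finset.monotone_filter_right _ (fun z _ hz => crapoPref_trans hz h1)
  refine (Finset.ssubset_iff_of_subset hsub).mpr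
    ⟨y, by simp [crapoPref_refl], by simp [h2]⟩

private lemma crapoW_A {S : Set α} {x y : α} (hx : x ∉ S) (hy : y ∈ S) :
    crapoW S x < crapoW S y := by
  refine crapoW_lt (Or.inl ⟨hx, hy⟩) (fun h => ?_)
  unfold crapoPref at h; tauto

private lemma crapoW_B {S : Set α} {x y : α} (hx : x ∈ S) (hy : y ∈ S) (hxy : x < y) :
    crapoW S x < crapoW S y := by
  refine crapoW_lt (Or.inr (Or.inl ⟨hx, hy, hxy.le⟩)) (fun h => ?_)
  unfold crapoPref at h
  rcases h with ⟨h1, h2⟩ | ⟨h1, h2, h3⟩ | ⟨h1, h2, h3⟩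
  · exact h1 hy
  · exact absurd h3 (not_le.mpr hxy)
  · exact h1 hy

private lemma crapoW_C {S : Set α} {x y : α} (hx : x ∉ S) (hy : y ∉ S) (hxy : y < x) :
    crapoW S x < crapoW S y := by
  refine crapoW_lt (Or.inr (Or.inr ⟨hx, hy, hxy.le⟩)) (fun h => ?_)
  unfold crapoPref at h
  rcases h with ⟨h1, h2⟩ | ⟨h1, h2, h3⟩ | ⟨h1, h2, h3⟩
  · exact hx h2
  · exact hy h1
  · exact absurd h3 (not_le.mpr hxy)

private lemma crapoW_inj {S : Set α} {x y : α} (hxy : x ≠ y) :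
    crapoW S x ≠ crapoW S y := by
  by_cases hx : x ∈ S <;> by_cases hy : y ∈ S
  · rcases hxy.lt_or_gt with h | h
    · exact (crapoW_B hx hy h).ne
    · exact (crapoW_B hy hx h).ne'
  · exact (crapoW_A hy hx).ne'
  · exact (crapoW_A hx hy).ne
  · rcases hxy.lt_or_gt with h | h
    · exact (crapoW_C hy hx h).ne'
    · exact (crapoW_C hx hy h).ne

end CrapoWeights
/-- Crapo: every subset `S` of the ground set can be written
uniquely as `S = (B − I) ∪ J` with `B` a basis, `I ⊆ in(B)` and `J ⊆ ex(B)`. -/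
theorem statement15 {α : Type*} [Fintype α] [LinearOrder α]
    (M : Matroid α) (hE : M.E = Set.univ) (S : Set α) :
    ∃! p : Set α × Set α × Set α,
      M.IsBase p.1 ∧ p.2.1 ⊆ minSet M p.1 ∧ p.2.2 ⊆ mexSet M p.1 ∧
        S = (p.1 \ p.2.1) ∪ p.2.2 := by
  classical
  -- choose a maximum-weight basis
  have hne : (Finset.univ.filter fun t : Finset α => M.IsBase ↑t).Nonempty := by
    obtain ⟨B₀, hB₀⟩ := M.exists_isBase
    refine ⟨(Set.toFinite B₀).toFinset, ?_⟩
    simp only [Finset.mem_filter, Finset.mem_univ, true_and, Set.Finite.coe_toFinset]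
    exact hB₀
  obtain ⟨Bf, hBfmem, hBfmax⟩ :=
    Finset.exists_max_image _ (fun t : Finset α => ∑ x ∈ t, crapoW S x) hne
  set B : Set α := ↑Bf with hBdef
  have hB : M.IsBase B := (Finset.mem_filter.mp hBfmem).2
  -- local optimality of B
  have hopt : ∀ b ∈ B, ∀ f ∉ B, M.IsBase (insert f (B \ {b})) →
      crapoW S f ≤ crapoW S b := by
    intro b hb f hf hbase
    have hbBf : b ∈ Bf := hb
    have hfb : f ∉ Bf.erase b := fun h => hf (Finset.erase_subset _ _ h)
    have hmem : insert f (Bf.erase b) ∈ Finset.univ.filter fun t : Finset α => M.IsBase ↑t := by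
      simp only [Finset.mem_filter, Finset.mem_univ, true_and]
      rw [Finset.coe_insert, Finset.coe_erase]
      exact hbase
    have hle := hBfmax _ hmem
    rw [Finset.sum_insert hfb, ← Finset.add_sum_erase _ _ hbBf] at hle
    omega
  -- existence: the triple (B, B \ S, S \ B)
  have hminB : B \ S ⊆ minSet M B := by
    intro b hb
    refine ⟨hb.1, insert b {x | x ∉ B ∧ M.IsBase (insert x (B \ {b}))},
      crapo_fund_cocircuit hE hB hb.1, ?_, Set.mem_insert _ _, ?_⟩
    · rw [hE]
      intro x hx
      rcases Set.mem_insert_iff.mp hx with rfl | hx'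
      · exact Set.mem_union_right _ rfl
      · exact Set.mem_union_left _ ⟨trivial, hx'.1⟩
    · intro g hg
      rcases Set.mem_insert_iff.mp hg with rfl | hg'
      · exact le_refl _
      · obtain ⟨hgB, hgbase⟩ := hg'
        have hle := hopt b hb.1 g hgB hgbase
        by_contra hlt
        push_neg at hlt
        by_cases hgS : g ∈ S
        · exact absurd (crapoW_A hb.2 hgS) (by omega)
        · exact absurd (crapoW_C hb.2 hgS hlt) (by omega)
  have hexB : S \ B ⊆ mexSet M B := by
    intro f hf
    refine ⟨insert f {x ∈ B | M.IsBase (insert f (B \ {x}))},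
      crapo_fund_circuit hE hB hf.2, ?_, Set.mem_insert _ _, ?_⟩
    · intro x hx
      rcases Set.mem_insert_iff.mp hx with rfl | hx'
      · exact Set.mem_insert _ _
      · exact Set.mem_insert_of_mem _ hx'.1
    · intro g hg
      rcases Set.mem_insert_iff.mp hg with rfl | hg'
      · exact le_refl _
      · obtain ⟨hgB, hgbase⟩ := hg'
        have hle := hopt g hgB f hf.2 hgbase
        by_contra hlt
        push_neg at hlt
        by_cases hgS : g ∈ S
        · exact absurd (crapoW_B hgS hf.1 hlt) (by omega)
        · exact absurd (crapoW_A hgS hf.1) (by omega)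
  refine ⟨⟨B, B \ S, S \ B⟩, ⟨hB, hminB, hexB, ?_⟩, ?_⟩
  · ext x
    simp only [Set.mem_union, Set.mem_diff]
    tauto
  -- uniqueness
  rintro ⟨B', I, J⟩ ⟨hB', hI, hJ, hS⟩
  simp only at hI hJ hS ⊢
  have hIB' : I ⊆ B' := fun x hx => (hI hx).1
  have hJB' : ∀ x ∈ J, x ∉ B' := by
    intro x hx hxB'
    obtain ⟨C, hC, hCs, hxC, -⟩ := hJ hx
    have hsub : C ⊆ B' := by
      intro y hy
      rcases Set.mem_insert_iff.mp (hCs hy) with rfl | h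
      · exact hxB'
      · exact h
    exact hC.1.not_indep (hB'.indep.subset hsub)
  have hIeq : I = B' \ S := by
    ext x
    constructor
    · intro hx
      refine ⟨hIB' hx, fun hxS => ?_⟩
      have hx' : x ∈ (B' \ I) ∪ J := by rw [← hS]; exact hxS
      rcases hx' with ⟨-, hxI⟩ | hxJ
      · exact hxI hx
      · exact hJB' x hxJ (hIB' hx)
    · rintro ⟨hxB', hxS⟩
      by_contra hxI
      exact hxS (by rw [hS]; exact Set.mem_union_left _ ⟨hxB', hxI⟩)
  have hJeq : J = S \ B' := by
    ext x
    constructor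
    · intro hx
      refine ⟨by rw [hS]; exact Set.mem_union_right _ hx, hJB' x hx⟩
    · rintro ⟨hxS, hxB'⟩
      have hx' : x ∈ (B' \ I) ∪ J := by rw [← hS]; exact hxS
      rcases hx' with ⟨h1, -⟩ | h2
      · exact absurd h1 hxB'
      · exact h2
  -- local optimality of B'
  have hopt' : ∀ b ∈ B', ∀ f ∉ B', M.IsBase (insert f (B' \ {b})) →
      crapoW S f ≤ crapoW S b := by
    intro b hb f hf hbase
    have hfb : f ≠ b := fun h => hf (h ▸ hb)
    by_cases hbS : b ∈ S
    · by_cases hfS : f ∈ S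
      · have hfJ : f ∈ J := by rw [hJeq]; exact ⟨hfS, hf⟩
        obtain ⟨C, hC, hCs, hfC, hminC⟩ := hJ hfJ
        have hCeq := crapo_circuit_eq_fund hE hB' hf hC hCs
        have hbC : b ∈ C := by rw [hCeq]; exact Set.mem_insert_of_mem _ ⟨hb, hbase⟩
        rcases (hminC b hbC).lt_or_eq with h | h
        · exact (crapoW_B hfS hbS h).le
        · exact absurd h hfb
      · exact (crapoW_A hfS hbS).le
    · have hbI : b ∈ I := by rw [hIeq]; exact ⟨hb, hbS⟩
      obtain ⟨-, D, hD, hDs, hbD, hminD⟩ := hI hbI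
      have hDs' : D ⊆ insert b B'ᶜ := by
        rw [hE] at hDs
        intro x hx
        rcases hDs hx with ⟨-, h⟩ | h
        · exact Set.mem_insert_of_mem _ h
        · exact (Set.mem_singleton_iff.mp h) ▸ Set.mem_insert _ _
      have hDeq := crapo_cocircuit_eq_fund hE hB' hb hD hDs'
      have hfD : f ∈ D := by rw [hDeq]; exact Set.mem_insert_of_mem _ ⟨hf, hbase⟩
      have hbf : b < f := lt_of_le_of_ne (hminD f hfD) (fun h => hfb h.symm)
      by_cases hfS : f ∈ S
      · exfalso
        have hfJ : f ∈ J := by rw [hJeq]; exact ⟨hfS, hf⟩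
        obtain ⟨C, hC, hCs, hfC, hminC⟩ := hJ hfJ
        have hCeq := crapo_circuit_eq_fund hE hB' hf hC hCs
        have hbC : b ∈ C := by rw [hCeq]; exact Set.mem_insert_of_mem _ ⟨hb, hbase⟩
        exact absurd (hminC b hbC) (not_le.mpr hbf)
      · exact (crapoW_C hfS hbS hbf).le
  -- B' = B
  have hBB' : B' = B := by
    by_contra hne'
    have hΔne : ((B' \ B) ∪ (B \ B')).Nonempty := by
      by_contra hem
      rw [Set.not_nonempty_iff_eq_empty, Set.union_empty_iff] at hem
      exact hne' (Set.Subset.antisymm (Set.diff_eq_empty.mp hem.1)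
        (Set.diff_eq_empty.mp hem.2))
    obtain ⟨e, he, hemin⟩ :=
      Finset.exists_min_image ((B' \ B) ∪ (B \ B')).toFinset (crapoW S)
        (by rwa [Set.toFinset_nonempty])
    rw [Set.mem_toFinset] at he
    rcases he with heB' | heB
    · obtain ⟨y, hy, hybase⟩ := hB'.exchange hB heB'
      have h1 := hopt' e heB'.1 y hy.2 hybase
      have h2 := hemin y (by rw [Set.mem_toFinset]; exact Or.inr hy)
      exact crapoW_inj (show y ≠ e from fun h => hy.2 (h ▸ heB'.1)) (le_antisymm h1 h2)
    · obtain ⟨y, hy, hybase⟩ := hB.exchange hB' heB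
      have h1 := hopt e heB.1 y hy.2 hybase
      have h2 := hemin y (by rw [Set.mem_toFinset]; exact Or.inl hy)
      exact crapoW_inj (show y ≠ e from fun h => hy.2 (h ▸ heB.1)) (le_antisymm h1 h2)
  simp only [Prod.mk.injEq]
  exact ⟨hBB', by rw [hIeq, hBB'], by rw [hJeq, hBB']⟩
end

section
/- Let M be a matroid on a linearly ordered finite set E, B a basis of M, and I ⊆ in(B) a subset of the internally active elements of B. Then the external activity of the independent set B − I equals the external activity of B: ex(B − I) = ex(B). -/
open Finset
open scoped Classical

/-- A circuit and a cocircuit cannot meet in exactly one element. -/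
lemma circ_cocirc_aux {α : Type*} {M : Matroid α} {C D : Set α}
    (hC : MIsCircuit M C) (hD : MIsCircuit M✶ D) {f : α} (hfC : f ∈ C) (hfD : f ∈ D) :
    ∃ g, g ∈ C ∧ g ∈ D ∧ g ≠ f := by
  by_contra h
  push_neg at h
  have hCf : M.Indep (C \ {f}) := hC.2 f hfC
  have hfcl : f ∈ M.closure (C \ {f}) := by
    have := hC.1
    rw [show C = insert f (C \ {f}) by simp [hfC, Set.insert_diff_singleton,
      Set.insert_eq_self.2 hfC], hCf.insert_dep_iff] at this
    exact this.1
  have hDco : M.Coindep (D \ {f}) := hD.2 f hfD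
  have hclD : M.closure (M.E \ (D \ {f})) = M.E := hDco.closure_compl
  have hDg : D ⊆ M.E := by
    have := hD.1.subset_ground
    simpa using this
  have hfE : f ∈ M.E := hDg hfD
  have hkey : M.E \ (D \ {f}) = insert f (M.E \ D) := by
    ext x
    simp only [Set.mem_diff, Set.mem_insert_iff, Set.mem_singleton_iff]
    constructor
    · rintro ⟨hx, hx2⟩
      by_cases hxf : x = f
      · exact Or.inl hxf
      · exact Or.inr ⟨hx, fun hxD => hx2 ⟨hxD, hxf⟩⟩
    · rintro (rfl | ⟨hx, hx2⟩)
      · exact ⟨hfE, fun h2 => h2.2 rfl⟩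
      · exact ⟨hx, fun h2 => hx2 h2.1⟩
  have hsub : C \ {f} ⊆ M.E \ D := by
    intro x hx
    refine ⟨hC.1.subset_ground hx.1, fun hxD => hx.2 (h x hx.1 hxD)⟩
  have hf2 : f ∈ M.closure (M.E \ D) := M.closure_subset_closure hsub hfcl
  have hgr : M.closure (M.E \ D) = M.E := by
    rw [hkey] at hclD
    rwa [Matroid.closure_insert_eq_of_mem_closure hf2] at hclD
  have : M.Coindep D := by
    rw [Matroid.coindep_iff_closure_compl_eq_ground (by exact hDg)]
    exact hgr
  exact hD.1.not_indep this

/-- Crapo: if `B` is a basis and `I ⊆ in(B)`, then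
`ex(B − I) = ex(B)`. -/
theorem statement16 {α : Type*} [Fintype α] [LinearOrder α]
    (M : Matroid α) (hE : M.E = Set.univ) (B I : Set α)
    (hB : M.IsBase B) (hI : I ⊆ minSet M B) :
    mexSet M (B \ I) = mexSet M B := by
  apply Set.Subset.antisymm
  · rintro e ⟨C, hC, hCsub, heC, hmin⟩
    exact ⟨C, hC, hCsub.trans (Set.insert_subset_insert Set.diff_subset), heC, hmin⟩
  · rintro e ⟨C, hC, hCsub, heC, hmin⟩
    have heB : e ∉ B := by
      intro heB
      have : C ⊆ B := by
        rwa [Set.insert_eq_self.2 heB] at hCsub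
      exact hC.1.not_indep (hB.indep.subset this)
    have hCI : ∀ f ∈ C, f ∉ I := by
      intro f hfC hfI
      obtain ⟨hfB, D, hD, hDsub, hfD, hfmin⟩ := hI hfI
      obtain ⟨g, hgC, hgD, hgf⟩ := circ_cocirc_aux hC hD hfC hfD
      have hge : g = e := by
        rcases hCsub hgC with h1 | h1
        · exact h1
        · rcases hDsub hgD with h2 | h2
          · exact absurd h1 h2.2
          · exact absurd h2 hgf
      rw [hge] at hgD
      have h1 : e ≤ f := hmin f hfC
      have h2 : f ≤ e := hfmin e hgD
      exact heB (le_antisymm h1 h2 ▸ hfB)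
    refine ⟨C, hC, ?_, heC, hmin⟩
    intro x hxC
    rcases hCsub hxC with h1 | h1
    · exact Or.inl h1
    · exact Or.inr ⟨h1, hCI x hxC⟩
end

section
/- Let Δ be a sequence of n linear forms spanning the dual of an ℓ-dimensional vector space V over a field K. Then the coefficient of t^d in the Hilbert series of P(Δ) equals binomial(ℓ+d−1, d) for all d ≤ N, and is strictly less than binomial(ℓ+N, N+1) at d = N+1, where N is the minimum cocircuit size of M(Δ); equivalently, P(Δ) ∩ Sym^d(V*) = Sym^d(V*) for d ≤ N and P(Δ) ∩ Sym^{N+1}(V*) ⊊ Sym^{N+1}(V*). -/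
open MvPolynomial Finset Submodule
open scoped Classical

noncomputable section S19Aux
namespace S19

variable {K : Type*} [Field K] {ℓ : ℕ}




variable {K : Type*} [Field K] {ℓ : ℕ}

lemma degree_eq_card_toMultiset (f : Fin ℓ →₀ ℕ) :
    f.degree = Multiset.card (Finsupp.toMultiset f) := by
  rw [Finsupp.card_toMultiset]; rfl

def degSet (ℓ d : ℕ) : Set (Fin ℓ →₀ ℕ) := {x | x.degree = d}

def degEquivSym (ℓ d : ℕ) : degSet ℓ d ≃ Sym (Fin ℓ) d where
  toFun x := ⟨Finsupp.toMultiset x.1, by rw [← degree_eq_card_toMultiset]; exact x.2⟩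
  invFun m := ⟨Multiset.toFinsupp (m : Multiset (Fin ℓ)), by
    show Finsupp.degree _ = d
    rw [degree_eq_card_toMultiset, Multiset.toFinsupp_toMultiset]
    exact m.2⟩
  left_inv x := Subtype.ext (Finsupp.toMultiset_toFinsupp x.1)
  right_inv m := Subtype.ext (Multiset.toFinsupp_toMultiset _)

instance fintypeDegSet (ℓ d : ℕ) : Fintype (degSet ℓ d) :=
  Fintype.ofEquiv _ (degEquivSym ℓ d).symm

lemma card_degSet (ℓ d : ℕ) : Fintype.card (degSet ℓ d) = (ℓ + d - 1).choose d := by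
  rw [Fintype.card_congr (degEquivSym ℓ d), Sym.card_sym_eq_multichoose, Fintype.card_fin,
    Nat.multichoose_eq]

def homEquiv (K : Type*) [Field K] (ℓ d : ℕ) :
    homogeneousSubmodule (Fin ℓ) K d ≃ₗ[K] (degSet ℓ d →₀ K) :=
  (LinearEquiv.ofEq _ _ (homogeneousSubmodule_eq_finsupp_supported (σ := Fin ℓ) K d)).trans
    (AddMonoidAlgebra.supportedEquivFinsupp (degSet ℓ d))

instance finDimHom (d : ℕ) : FiniteDimensional K (homogeneousSubmodule (Fin ℓ) K d) :=
  Module.Finite.equiv (homEquiv K ℓ d).symm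

lemma finrank_hom (d : ℕ) :
    Module.finrank K (homogeneousSubmodule (Fin ℓ) K d) = (ℓ + d - 1).choose d := by
  rw [(homEquiv K ℓ d).finrank_eq, Module.finrank_finsupp_self, card_degSet]



variable {K : Type*} [Field K] {ℓ n : ℕ} {N : ℕ}

lemma spanH_le_hom1 (Δ : Fin n → MvPolynomial (Fin ℓ) K)
    (hdeg : ∀ i, Δ i ∈ homogeneousSubmodule (Fin ℓ) K 1) (A : Set (Fin n)) :
    span K (Δ '' A) ≤ homogeneousSubmodule (Fin ℓ) K 1 := by
  rw [span_le]
  rintro x ⟨i, _, rfl⟩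
  exact hdeg i

lemma finrank_hom1 : Module.finrank K (homogeneousSubmodule (Fin ℓ) K 1) = ℓ := by
  rw [finrank_hom]; simp

lemma fullrank (Δ : Fin n → MvPolynomial (Fin ℓ) K)
    (hdeg : ∀ i, Δ i ∈ homogeneousSubmodule (Fin ℓ) K 1)
    (hspan : homogeneousSubmodule (Fin ℓ) K 1 ≤ span K (Set.range Δ))
    (hN2 : ∀ H : Finset (Fin n), IsFlat Δ H → rk Δ H = ℓ - 1 →
      N ≤ (Finset.univ \ H).card)
    (S : Finset (Fin n)) (hS : S.card < N) :
    homogeneousSubmodule (Fin ℓ) K 1 ≤ span K (Δ '' ((Finset.univ \ S : Finset (Fin n)) : Set (Fin n))) := by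
  by_contra hcon
  -- the collection of "bad" supersets of univ \ S
  set 𝒞 : Finset (Finset (Fin n)) := Finset.univ.filter
    (fun H => (Finset.univ \ S) ⊆ H ∧
      ¬ homogeneousSubmodule (Fin ℓ) K 1 ≤ span K (Δ '' (H : Set (Fin n)))) with h𝒞
  have hne : 𝒞.Nonempty := ⟨Finset.univ \ S, by
    rw [h𝒞, Finset.mem_filter]
    exact ⟨Finset.mem_univ _, Finset.Subset.refl _, hcon⟩⟩
  obtain ⟨H, hHmem, hHmax⟩ := Finset.exists_max_image 𝒞 Finset.card hne
  rw [h𝒞, Finset.mem_filter] at hHmem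
  obtain ⟨-, hHsub, hHbad⟩ := hHmem
  have hle : span K (Δ '' (H : Set (Fin n))) ≤ homogeneousSubmodule (Fin ℓ) K 1 :=
    spanH_le_hom1 Δ hdeg _
  have hlt : span K (Δ '' (H : Set (Fin n))) < homogeneousSubmodule (Fin ℓ) K 1 :=
    lt_of_le_of_ne hle (fun h => hHbad (le_of_eq h.symm))
  have hfr : Module.finrank K (span K (Δ '' (H : Set (Fin n)))) < ℓ := by
    have h := Submodule.finrank_lt_finrank_of_lt hlt
    rwa [finrank_hom1] at h
  have hHne : H ≠ Finset.univ := by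
    rintro rfl
    apply hHbad
    rw [Finset.coe_univ, Set.image_univ]
    exact hspan
  -- maximality: adding any element to H makes it good
  have hmax' : ∀ e : Fin n, e ∉ H →
      homogeneousSubmodule (Fin ℓ) K 1 ≤ span K (Δ '' ((insert e H : Finset (Fin n)) : Set (Fin n))) := by
    intro e he
    by_contra hbad
    have hmem : insert e H ∈ 𝒞 := by
      rw [h𝒞, Finset.mem_filter]
      exact ⟨Finset.mem_univ _, hHsub.trans (Finset.subset_insert _ _), hbad⟩
    have := hHmax _ hmem
    rw [Finset.card_insert_of_notMem he] at this
    omega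
  -- H is a flat
  have hflat : IsFlat Δ H := by
    unfold IsFlat clos
    ext i
    simp only [Finset.mem_filter, Finset.mem_univ, true_and]
    constructor
    · intro hi
      by_contra hiH
      apply hHbad
      refine le_trans (hmax' i hiH) (span_le.mpr ?_)
      rw [Finset.coe_insert, Set.image_insert_eq]
      rw [Set.insert_subset_iff]
      exact ⟨hi, Set.image_mono (by simp) |>.trans subset_span⟩
    · intro hi
      exact subset_span (Set.mem_image_of_mem _ (Finset.mem_coe.mpr hi))
  -- rank of H is ℓ - 1
  have hrk : rk Δ H = ℓ - 1 := by
    have hlb : ℓ - 1 ≤ Module.finrank K (span K (Δ '' (H : Set (Fin n)))) := by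
      by_contra hlb
      push_neg at hlb
      obtain ⟨e, he⟩ : ∃ e, e ∉ H := by
        by_contra hall
        push_neg at hall
        exact hHne (Finset.eq_univ_iff_forall.mpr hall)
      have hgood := hmax' e he
      have hsing : (K ∙ Δ e) ≤ homogeneousSubmodule (Fin ℓ) K 1 :=
        (Submodule.span_singleton_le_iff_mem _ _).mpr (hdeg e)
      have hsup_le : span K (Δ '' (H : Set (Fin n))) ⊔ (K ∙ Δ e) ≤
          homogeneousSubmodule (Fin ℓ) K 1 := sup_le hle hsing
      have hsp : span K (Δ '' ((insert e H : Finset (Fin n)) : Set (Fin n))) =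
          (K ∙ Δ e) ⊔ span K (Δ '' (H : Set (Fin n))) := by
        rw [Finset.coe_insert, Set.image_insert_eq, Submodule.span_insert]
      have heq : span K (Δ '' (H : Set (Fin n))) ⊔ (K ∙ Δ e) =
          homogeneousSubmodule (Fin ℓ) K 1 := by
        refine le_antisymm hsup_le ?_
        rw [sup_comm, ← hsp]
        exact hgood
      haveI : FiniteDimensional K (span K (Δ '' (H : Set (Fin n)))) :=
        Submodule.finiteDimensional_of_le hle
      haveI : FiniteDimensional K (K ∙ Δ e : Submodule K (MvPolynomial (Fin ℓ) K)) :=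
        Submodule.finiteDimensional_of_le hsing
      have hb := Submodule.finrank_add_le_finrank_add_finrank
        (span K (Δ '' (H : Set (Fin n)))) (K ∙ Δ e)
      rw [heq, finrank_hom1] at hb
      have h1 : Module.finrank K (K ∙ Δ e : Submodule K (MvPolynomial (Fin ℓ) K)) ≤ 1 := by
        rcases eq_or_ne (Δ e) 0 with h | h
        · rw [h, Submodule.span_zero_singleton]
          simp
        · rw [finrank_span_singleton h]
      omega
    unfold rk
    omega
  have hNH := hN2 H hflat hrk
  have hsub2 : Finset.univ \ H ⊆ S := by
    intro x hx
    rw [Finset.mem_sdiff] at hx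
    by_contra hxS
    exact hx.2 (hHsub (Finset.mem_sdiff.mpr ⟨Finset.mem_univ _, hxS⟩))
  have := Finset.card_le_card hsub2
  omega

lemma key1 (Δ : Fin n → MvPolynomial (Fin ℓ) K)
    (hdeg : ∀ i, Δ i ∈ homogeneousSubmodule (Fin ℓ) K 1)
    (hspan : homogeneousSubmodule (Fin ℓ) K 1 ≤ span K (Set.range Δ))
    (hN2 : ∀ H : Finset (Fin n), IsFlat Δ H → rk Δ H = ℓ - 1 →
      N ≤ (Finset.univ \ H).card) :
    ∀ (t : ℕ) (m : Multiset (Fin n)), Multiset.card m ≤ N →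
      Multiset.card m - m.toFinset.card ≤ t → (m.map Δ).prod ∈ Pspace Δ := by
  intro t
  induction t with
  | zero =>
    intro m hcard hmeas
    have hnd : m.Nodup := by
      by_contra hnd
      have h1 := Multiset.toFinset_card_le m
      have h2 : m.toFinset.card ≠ Multiset.card m :=
        fun h => hnd (Multiset.toFinset_card_eq_card_iff_nodup.mp h)
      omega
    exact subset_span (Set.mem_range_self (f := fun S : Finset (Fin n) => prodForms Δ S) (⟨m, hnd⟩ : Finset (Fin n)))
  | succ t ih =>
    intro m hcard hmeas
    by_cases hnd : m.Nodup
    · exact subset_span (Set.mem_range_self (f := fun S : Finset (Fin n) => prodForms Δ S) (⟨m, hnd⟩ : Finset (Fin n)))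
    · have hlt : m.toFinset.card < Multiset.card m := by
        have h1 := Multiset.toFinset_card_le m
        have h2 : m.toFinset.card ≠ Multiset.card m :=
          fun h => hnd (Multiset.toFinset_card_eq_card_iff_nodup.mp h)
        omega
      obtain ⟨i, hi2⟩ : ∃ i, ¬ m.count i ≤ 1 := by
        by_contra hall
        push_neg at hall
        exact hnd (Multiset.nodup_iff_count_le_one.mpr (fun a => by
          have := hall a; omega))
      push_neg at hi2
      have him : i ∈ m := by
        rw [← Multiset.count_pos]; omega
      set m' := m.erase i with hm'
      have hm : m = i ::ₘ m' := (Multiset.cons_erase him).symm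
      have him' : i ∈ m' := by
        rw [← Multiset.count_pos, hm', Multiset.count_erase_self]; omega
      have hts : m'.toFinset = m.toFinset := by
        conv_rhs => rw [hm]
        rw [Multiset.toFinset_cons, Finset.insert_eq_self.mpr (Multiset.mem_toFinset.mpr him')]
      have hcm' : Multiset.card m' + 1 = Multiset.card m := by rw [hm]; simp
      have hScard : m.toFinset.card < N := lt_of_lt_of_le hlt hcard
      have hfull := fullrank Δ hdeg hspan hN2 m.toFinset hScard
      set q := (m'.map Δ).prod with hq
      have hgoal : (m.map Δ).prod = Δ i * q := by
        rw [hm, Multiset.map_cons, Multiset.prod_cons]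
      rw [hgoal]
      have hTmem : Δ i ∈ Submodule.comap (LinearMap.mulRight K q) (Pspace Δ) := by
        refine span_le.mpr ?_ (hfull (hdeg i))
        rintro x ⟨j, hj, rfl⟩
        simp only [SetLike.mem_coe, Submodule.mem_comap, LinearMap.mulRight_apply]
        rw [Finset.mem_coe, Finset.mem_sdiff] at hj
        have hjm : j ∉ m.toFinset := hj.2
        have h2 : Δ j * q = ((j ::ₘ m').map Δ).prod := by
          rw [Multiset.map_cons, Multiset.prod_cons]
        rw [h2]
        apply ih
        · rw [Multiset.card_cons]; omega
        · rw [Multiset.card_cons, Multiset.toFinset_cons,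
            Finset.card_insert_of_notMem (by rw [hts]; exact hjm), hts]
          omega
      exact hTmem

lemma key2 (Δ : Fin n → MvPolynomial (Fin ℓ) K)
    (hdeg : ∀ i, Δ i ∈ homogeneousSubmodule (Fin ℓ) K 1)
    (hspan : homogeneousSubmodule (Fin ℓ) K 1 ≤ span K (Set.range Δ))
    (hN2 : ∀ H : Finset (Fin n), IsFlat Δ H → rk Δ H = ℓ - 1 →
      N ≤ (Finset.univ \ H).card) :
    ∀ (mp : Multiset (MvPolynomial (Fin ℓ) K)),
      (∀ p ∈ mp, p ∈ span K (Set.range Δ)) →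
      ∀ r : Multiset (Fin n), Multiset.card mp + Multiset.card r ≤ N →
      mp.prod * (r.map Δ).prod ∈ Pspace Δ := by
  intro mp
  induction mp using Multiset.induction_on with
  | empty =>
    intro _ r hr
    rw [Multiset.prod_zero, one_mul]
    exact key1 Δ hdeg hspan hN2 (Multiset.card r) r (by simpa using hr) (by omega)
  | cons p mp ih =>
    intro hmem r hcardN
    rw [Multiset.prod_cons, mul_assoc]
    have hTmem : p ∈ Submodule.comap
        (LinearMap.mulRight K (mp.prod * (r.map Δ).prod)) (Pspace Δ) := by
      refine span_le.mpr ?_ (hmem p (Multiset.mem_cons_self _ _))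
      rintro x ⟨j, rfl⟩
      simp only [SetLike.mem_coe, Submodule.mem_comap, LinearMap.mulRight_apply]
      have h2 : Δ j * (mp.prod * (r.map Δ).prod) = mp.prod * ((j ::ₘ r).map Δ).prod := by
        rw [Multiset.map_cons, Multiset.prod_cons]; ring
      rw [h2]
      apply ih (fun x hx => hmem x (Multiset.mem_cons_of_mem hx))
      rw [Multiset.card_cons] at hcardN ⊢
      omega
    exact hTmem

lemma prod_map_X (g : Fin ℓ →₀ ℕ) :
    ((Finsupp.toMultiset g).map (X : Fin ℓ → MvPolynomial (Fin ℓ) K)).prod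
      = monomial g (1 : K) := by
  induction g using Finsupp.induction with
  | zero => simp [monomial_zero']
  | single_add a b f ha hb ihf =>
    rw [Finsupp.toMultiset_add, Multiset.map_add, Multiset.prod_add, ihf,
      Finsupp.toMultiset_single, Multiset.map_nsmul, Multiset.map_singleton,
      Multiset.prod_nsmul, Multiset.prod_singleton, X_pow_eq_monomial, monomial_mul, one_mul]

lemma hom_le_P (Δ : Fin n → MvPolynomial (Fin ℓ) K)
    (hdeg : ∀ i, Δ i ∈ homogeneousSubmodule (Fin ℓ) K 1)
    (hspan : homogeneousSubmodule (Fin ℓ) K 1 ≤ span K (Set.range Δ))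
    (hN2 : ∀ H : Finset (Fin n), IsFlat Δ H → rk Δ H = ℓ - 1 →
      N ≤ (Finset.univ \ H).card)
    (d : ℕ) (hd : d ≤ N) :
    homogeneousSubmodule (Fin ℓ) K d ≤ Pspace Δ := by
  intro p hp
  rw [mem_homogeneousSubmodule] at hp
  rw [p.as_sum]
  refine Submodule.sum_mem _ (fun v hv => ?_)
  have hvd : v.degree = d := by
    rw [Finsupp.degree_eq_weight_one]
    exact hp (MvPolynomial.mem_support_iff.mp hv)
  have h1 : monomial v (coeff v p) = coeff v p • monomial v (1 : K) := by
    rw [smul_monomial, smul_eq_mul, mul_one]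
  rw [h1]
  refine Submodule.smul_mem _ _ ?_
  rw [← prod_map_X]
  have := key2 Δ hdeg hspan hN2 ((Finsupp.toMultiset v).map X)
    ?_ 0 ?_
  · simpa using this
  · intro x hx
    rw [Multiset.mem_map] at hx
    obtain ⟨i, _, rfl⟩ := hx
    exact hspan (by rw [mem_homogeneousSubmodule]; exact isHomogeneous_X K i)
  · simp only [Multiset.card_map, Multiset.card_zero, add_zero]
    rw [← degree_eq_card_toMultiset, hvd]
    exact hd

lemma hom1_le_spanX : homogeneousSubmodule (Fin ℓ) K 1 ≤
    span K (Set.range (X : Fin ℓ → MvPolynomial (Fin ℓ) K)) := by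
  intro p hp
  rw [mem_homogeneousSubmodule] at hp
  rw [p.as_sum]
  refine Submodule.sum_mem _ (fun v hv => ?_)
  have hvd : v.degree = 1 := by
    rw [Finsupp.degree_eq_weight_one]
    exact hp (MvPolynomial.mem_support_iff.mp hv)
  obtain ⟨i, rfl⟩ : ∃ i, v = Finsupp.single i 1 := by
    have hc : Multiset.card (Finsupp.toMultiset v) = 1 := by
      rw [← degree_eq_card_toMultiset, hvd]
    obtain ⟨a, ha⟩ := Multiset.card_eq_one.mp hc
    refine ⟨a, ?_⟩
    have h2 := Finsupp.toMultiset_toFinsupp v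
    rw [← h2, ha, Multiset.toFinsupp_singleton]
  have hX : (X i : MvPolynomial (Fin ℓ) K) = monomial (Finsupp.single i 1) 1 := rfl
  have h3 : monomial (Finsupp.single i 1) (coeff (Finsupp.single i 1) p)
      = coeff (Finsupp.single i 1) p • (X i : MvPolynomial (Fin ℓ) K) := by
    rw [hX, smul_monomial, smul_eq_mul, mul_one]
  rw [h3]
  exact Submodule.smul_mem _ _ (subset_span (Set.mem_range_self i))

lemma eval_add_hom1 {p : MvPolynomial (Fin ℓ) K}
    (hp : p ∈ span K (Set.range (X : Fin ℓ → MvPolynomial (Fin ℓ) K))) (v w : Fin ℓ → K) :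
    eval (v + w) p = eval v p + eval w p := by
  induction hp using Submodule.span_induction with
  | mem x hx =>
    obtain ⟨i, rfl⟩ := hx
    simp
  | zero => simp
  | add a b _ _ iha ihb => rw [map_add, map_add, map_add, iha, ihb]; ring
  | smul c a _ iha => rw [smul_eval, smul_eval, smul_eval, iha]; ring

lemma eval_smul_hom1 {p : MvPolynomial (Fin ℓ) K}
    (hp : p ∈ span K (Set.range (X : Fin ℓ → MvPolynomial (Fin ℓ) K))) (c : K) (v : Fin ℓ → K) :
    eval (c • v) p = c * eval v p := by
  induction hp using Submodule.span_induction with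
  | mem x hx =>
    obtain ⟨i, rfl⟩ := hx
    simp
  | zero => simp
  | add a b _ _ iha ihb => rw [map_add, map_add, iha, ihb]; ring
  | smul d a _ iha => rw [smul_eval, smul_eval, iha]; ring

/-- evaluation at a point as a linear functional -/
def evalLin (v : Fin ℓ → K) : MvPolynomial (Fin ℓ) K →ₗ[K] K where
  toFun := eval v
  map_add' := fun a b => map_add _ a b
  map_smul' := fun c a => by simp [smul_eval]

lemma exists_point (Δ : Fin n → MvPolynomial (Fin ℓ) K)
    (hdeg : ∀ i, Δ i ∈ homogeneousSubmodule (Fin ℓ) K 1)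
    (hl : 0 < ℓ) (H : Finset (Fin n)) (hrk : rk Δ H = ℓ - 1) :
    ∃ v : Fin ℓ → K, v ≠ 0 ∧ ∀ i ∈ H, eval v (Δ i) = 0 := by
  set W := span K (Δ '' (H : Set (Fin n))) with hW
  haveI : FiniteDimensional K W :=
    Submodule.finiteDimensional_of_le (spanH_le_hom1 Δ hdeg _)
  have hfr : Module.finrank K W = ℓ - 1 := hrk
  let b : Module.Basis (Fin (ℓ-1)) K W := Module.finBasisOfFinrankEq K W hfr
  let Ψ : (Fin ℓ → K) →ₗ[K] (Fin (ℓ-1) → K) := LinearMap.pi (fun j =>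
    { toFun := fun v => eval v ((b j : MvPolynomial (Fin ℓ) K)),
      map_add' := fun v w => eval_add_hom1 (hom1_le_spanX (spanH_le_hom1 Δ hdeg _ (b j).2)) v w,
      map_smul' := fun c v => eval_smul_hom1 (hom1_le_spanX (spanH_le_hom1 Δ hdeg _ (b j).2)) c v })
  have hker : LinearMap.ker Ψ ≠ ⊥ := by
    intro hk
    have hinj : Function.Injective Ψ := LinearMap.ker_eq_bot.mp hk
    have hle := LinearMap.finrank_le_finrank_of_injective hinj
    rw [Module.finrank_fintype_fun_eq_card, Module.finrank_fintype_fun_eq_card,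
      Fintype.card_fin, Fintype.card_fin] at hle
    omega
  obtain ⟨v, hvmem, hvne⟩ := (Submodule.ne_bot_iff _).mp hker
  refine ⟨v, hvne, ?_⟩
  have hbz : ∀ j, eval v ((b j : MvPolynomial (Fin ℓ) K)) = 0 := by
    intro j
    have h0 := LinearMap.mem_ker.mp hvmem
    have h1 := congrFun h0 j
    simpa [Ψ, LinearMap.pi_apply] using h1
  have hzero : (evalLin v).comp W.subtype = 0 := by
    apply b.ext
    intro j
    simpa [evalLin] using hbz j
  have hWz : ∀ w : W, eval v (w : MvPolynomial (Fin ℓ) K) = 0 := by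
    intro w
    have := LinearMap.congr_fun hzero w
    simpa [evalLin] using this
  intro i hi
  exact hWz ⟨Δ i, subset_span (Set.mem_image_of_mem _ (Finset.mem_coe.mpr hi))⟩

lemma notP (Δ : Fin n → MvPolynomial (Fin ℓ) K)
    (hdeg : ∀ i, Δ i ∈ homogeneousSubmodule (Fin ℓ) K 1)
    (hl : 0 < ℓ) (H : Finset (Fin n)) (hrk : rk Δ H = ℓ - 1)
    (hcard : (Finset.univ \ H).card = N) :
    ¬ homogeneousSubmodule (Fin ℓ) K (N+1) ≤ Pspace Δ := by
  intro hle
  obtain ⟨v, hv0, hvH⟩ := exists_point Δ hdeg hl H hrk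
  obtain ⟨i0, hi0⟩ : ∃ i, v i ≠ 0 := Function.ne_iff.mp hv0
  set F : MvPolynomial (Fin ℓ) K →ₗ[K] K :=
    (evalLin v).comp (homogeneousComponent (N+1)) with hF
  have hPF : Pspace Δ ≤ LinearMap.ker F := by
    rw [Pspace, span_le]
    rintro x ⟨S, rfl⟩
    simp only [SetLike.mem_coe, LinearMap.mem_ker, hF, LinearMap.comp_apply]
    have hhom : prodForms Δ S ∈ homogeneousSubmodule (Fin ℓ) K (S.card) := by
      rw [mem_homogeneousSubmodule]
      have h := IsHomogeneous.prod S Δ (fun _ => 1)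
        (fun i _ => (mem_homogeneousSubmodule _ _).mp (hdeg i))
      simpa [prodForms] using h
    rw [homogeneousComponent_of_mem hhom]
    by_cases hc : N + 1 = S.card
    · rw [if_pos hc]
      show eval v (prodForms Δ S) = 0
      obtain ⟨i, hiS, hiH⟩ : ∃ i ∈ S, i ∈ H := by
        by_contra hno
        push_neg at hno
        have hsub : S ⊆ Finset.univ \ H :=
          fun x hx => Finset.mem_sdiff.mpr ⟨Finset.mem_univ _, hno x hx⟩
        have hc2 := Finset.card_le_card hsub
        rw [hcard] at hc2
        omega
      unfold prodForms
      rw [map_prod]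
      exact Finset.prod_eq_zero hiS (hvH i hiH)
    · rw [if_neg hc, map_zero]
  have hg : (X i0 : MvPolynomial (Fin ℓ) K) ^ (N+1) ∈
      homogeneousSubmodule (Fin ℓ) K (N+1) := by
    rw [mem_homogeneousSubmodule]
    exact isHomogeneous_X_pow i0 (N+1)
  have hFg : F ((X i0) ^ (N+1)) = 0 := hPF (hle hg)
  rw [hF, LinearMap.comp_apply, homogeneousComponent_of_mem hg, if_pos rfl] at hFg
  have : eval v ((X i0 : MvPolynomial (Fin ℓ) K) ^ (N+1)) = (v i0) ^ (N+1) := by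
    rw [map_pow, eval_X]
  apply pow_ne_zero _ hi0
  rw [← this]
  exact hFg


end S19
end S19Aux

/-- if `N` is the minimum cocircuit size of `M(Δ)`, then the Hilbert
series coefficients of `P(Δ)` equal `C(ℓ+d−1, d)` for `d ≤ N` and the coefficient at
`d = N+1` is strictly smaller than `C(ℓ+N, N+1)`; equivalently
`Sym^d(V*) ⊆ P(Δ)` for `d ≤ N` while `Sym^{N+1}(V*) ⊄ P(Δ)`. -/
theorem statement19 {K : Type*} [Field K] {ℓ n : ℕ}
    (Δ : Fin n → MvPolynomial (Fin ℓ) K)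
    (hdeg : ∀ i, Δ i ∈ homogeneousSubmodule (Fin ℓ) K 1)
    (hspan : homogeneousSubmodule (Fin ℓ) K 1 ≤ span K (Set.range Δ))
    (hl : 0 < ℓ) (N : ℕ)
    (hN1 : ∃ H : Finset (Fin n), IsFlat Δ H ∧ rk Δ H = ℓ - 1 ∧
      (Finset.univ \ H).card = N)
    (hN2 : ∀ H : Finset (Fin n), IsFlat Δ H → rk Δ H = ℓ - 1 →
      N ≤ (Finset.univ \ H).card) :
    (∀ d ≤ N, Module.finrank K
        ↥(Pspace Δ ⊓ homogeneousSubmodule (Fin ℓ) K d) = (ℓ + d - 1).choose d) ∧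
    Module.finrank K ↥(Pspace Δ ⊓ homogeneousSubmodule (Fin ℓ) K (N + 1)) <
        (ℓ + N).choose (N + 1) ∧
    (∀ d ≤ N, homogeneousSubmodule (Fin ℓ) K d ≤ Pspace Δ) ∧
    ¬ homogeneousSubmodule (Fin ℓ) K (N + 1) ≤ Pspace Δ := by
  have part3 : ∀ d ≤ N, homogeneousSubmodule (Fin ℓ) K d ≤ Pspace Δ :=
    fun d hd => S19.hom_le_P Δ hdeg hspan hN2 d hd
  obtain ⟨H, hHflat, hHrk, hHcard⟩ := hN1
  have part4 : ¬ homogeneousSubmodule (Fin ℓ) K (N + 1) ≤ Pspace Δ :=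
    S19.notP Δ hdeg hl H hHrk hHcard
  refine ⟨?_, ?_, part3, part4⟩
  · intro d hd
    rw [inf_eq_right.mpr (part3 d hd), S19.finrank_hom]
  · have hlt : Pspace Δ ⊓ homogeneousSubmodule (Fin ℓ) K (N+1) <
        homogeneousSubmodule (Fin ℓ) K (N+1) :=
      lt_of_le_of_ne inf_le_right (fun h => part4 (by rw [← h]; exact inf_le_left))
    have hlt2 := Submodule.finrank_lt_finrank_of_lt hlt
    rw [S19.finrank_hom] at hlt2
    have he : ℓ + (N+1) - 1 = ℓ + N := by omega
    rwa [he] at hlt2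
end
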